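/- Let d > 0, α ∈ [0, 1], and suppose there exist constants C, c > 0 such that k_μ(t) ≥ C·exp(−c·t^{d/(d+2)}·(ln t)^α) for all t ≥ 2, and suppose μ([1 − ε₀, 1]) < 1 for some ε₀ ∈ (0, 1]. Then μ([1 − ε, 1]) > 0 for all sufficiently small ε > 0, and liminf_{ε → 0⁺} ln(−ln(μ([1 − ε, 1])))/ln ε ≥ −d/2. -/

import Mathlib

/-! Since `μ` lives on `(-∞, 1]`, splitting `k_μ(t)` at `1 - ε` gives
`k_μ(t) ≤ μ(I_ε) + e^{-tε}`. With `θ = d/(d+2)` and `t = ε^{-γ}` for some `γ > 1/(1-θ)`, the decay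
`e^{-tε}` beats the assumed lower bound `C e^{-c t^θ (ln t)^α}`, so
`μ(I_ε) ≥ (C/2) e^{-c t^θ (ln t)^α} ≥ exp(-ε^{-s})` for every `s > γθ`, the logarithm costing only
an arbitrarily small power of `t`. Letting `γ ↓ 1/(1-θ)`, `γθ ↓ θ/(1-θ) = d/2`. -/

open MeasureTheory Real Filter Topology Set Asymptotics

theorem integral_exp_le_measureReal_Icc_add_exp (μ : Measure ℝ) [IsProbabilityMeasure μ]
    (h1 : ∀ᵐ l ∂μ, l ≤ 1) {t : ℝ} (ht : 0 ≤ t) (ε : ℝ) :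
    ∫ l, exp (-t * (1 - l)) ∂μ ≤ μ.real (Icc (1 - ε) 1) + exp (-t * ε) := by
  have hle_one : ∀ᵐ l ∂μ, exp (-t * (1 - l)) ≤ 1 := by
    filter_upwards [h1] with l hl
    exact exp_le_one_iff.2 (by nlinarith)
  have hint : Integrable (fun l => exp (-t * (1 - l))) μ :=
    .of_bound (by fun_prop) 1 (hle_one.mono fun l hl => by rwa [norm_of_nonneg (exp_pos _).le])
  have hpt : ∀ᵐ l ∂μ, exp (-t * (1 - l)) ≤ (Icc (1 - ε) 1).indicator 1 l + exp (-t * ε) := by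
    filter_upwards [h1, hle_one] with l hl hl'
    by_cases hmem : l ∈ Icc (1 - ε) 1
    · simp only [indicator_of_mem hmem, Pi.one_apply]
      linarith [exp_pos (-t * ε)]
    · have hlt : ε < 1 - l := by
        by_contra! h
        exact hmem ⟨by linarith, hl⟩
      simp only [indicator_of_notMem hmem, zero_add]
      exact exp_le_exp.2 (by nlinarith)
  calc ∫ l, exp (-t * (1 - l)) ∂μ
      ≤ ∫ l, ((Icc (1 - ε) 1).indicator 1 l + exp (-t * ε)) ∂μ :=
        integral_mono_ae hint ((integrable_const 1).indicator measurableSet_Icc |>.add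
          (integrable_const _)) hpt
    _ = μ.real (Icc (1 - ε) 1) + exp (-t * ε) := by
        rw [integral_add ((integrable_const 1).indicator measurableSet_Icc) (integrable_const _),
          integral_indicator_one measurableSet_Icc, integral_const, probReal_univ, one_smul]

theorem eventually_mul_rpow_mul_log_rpow_add_le_rpow {θ b : ℝ} (hθb : θ < b) (hb : 0 < b)
    (c α K : ℝ) : ∀ᶠ t in atTop, c * t ^ θ * log t ^ α + K ≤ t ^ b := by
  have hmain : (fun t => c * t ^ θ * log t ^ α) =o[atTop] fun t => t ^ b := by
    refine (((isBigO_refl (fun t : ℝ => t ^ θ) atTop).const_mul_left c).mul_isLittleO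
      (isLittleO_log_rpow_rpow_atTop α (sub_pos.2 hθb))).congr' .rfl ?_
    filter_upwards [eventually_gt_atTop 0] with t ht
    rw [← rpow_add ht, add_sub_cancel]
  have hconst : (fun _ : ℝ => K) =o[atTop] fun t => t ^ b :=
    isLittleO_const_left.2 <| .inr <| tendsto_norm_atTop_atTop.comp (tendsto_rpow_atTop hb)
  filter_upwards [(hmain.add hconst).eventuallyLE, eventually_gt_atTop 0] with t h ht
  rw [norm_of_nonneg (rpow_nonneg ht.le b)] at h
  exact (le_abs_self _).trans h

theorem eventually_exp_neg_rpow_le {F : ℝ → ℝ} {C c θ α t₀ s : ℝ} (hC : 0 < C) (hθ0 : 0 < θ)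
    (hθ1 : θ < 1) (h : ∀ t, t₀ ≤ t → ∀ ε, C * exp (-c * t ^ θ * log t ^ α) ≤ F ε + exp (-t * ε))
    (hs : θ / (1 - θ) < s) : ∀ᶠ ε in 𝓝[>] 0, exp (-ε ^ (-s)) ≤ F ε := by
  have h1θ : 0 < 1 - θ := sub_pos.2 hθ1
  have hgap : 1 / (1 - θ) < s / θ := by
    rw [div_lt_div_iff₀ h1θ hθ0]; rw [div_lt_iff₀ h1θ] at hs; linarith
  obtain ⟨γ, hγ1, hγ2⟩ := exists_between hgap
  have hγ : 0 < γ := (one_div_pos.2 h1θ).trans hγ1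
  have hmix : θ < 1 - 1 / γ := by
    rw [div_lt_iff₀ h1θ] at hγ1; rw [lt_sub_comm, div_lt_iff₀ hγ]; linarith
  have hsγ : θ < s / γ := by rw [lt_div_iff₀ hγ]; rw [lt_div_iff₀ hθ0] at hγ2; linarith
  have ht : Tendsto (fun ε : ℝ => ε ^ (-γ)) (𝓝[>] 0) atTop :=
    tendsto_rpow_neg_nhdsGT_zero (by linarith)
  filter_upwards [ht.eventually <| eventually_mul_rpow_mul_log_rpow_add_le_rpow hmix
      (by linarith) c α (log (2 / C)),
    ht.eventually <| eventually_mul_rpow_mul_log_rpow_add_le_rpow hsγ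
      (hθ0.trans hsγ) c α (log (2 / C)),
    ht.eventually_ge_atTop t₀, self_mem_nhdsWithin] with ε hdecay hsmall ht₀ (hε : 0 < ε)
  set t := ε ^ (-γ)
  set B := c * t ^ θ * log t ^ α + log (2 / C)
  have htε : t ^ (1 - 1 / γ) = t * ε := by
    rw [← rpow_mul hε.le, show -γ * (1 - 1 / γ) = -γ + 1 by field_simp; ring, rpow_add hε,
      rpow_one]
  have hts : t ^ (s / γ) = ε ^ (-s) := by
    rw [← rpow_mul hε.le]; congr 1; field_simp
  have hexpB : C * exp (-c * t ^ θ * log t ^ α) = 2 * exp (-B) := by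
    rw [neg_add, exp_add, exp_neg (log _), exp_log (by positivity)]; field_simp
  have hk := h t ht₀ ε
  rw [hexpB] at hk
  calc exp (-ε ^ (-s)) ≤ exp (-B) := exp_le_exp.2 (by linarith)
    _ ≤ F ε := by linarith [exp_le_exp.2 (show -t * ε ≤ -B by linarith)]

theorem neg_le_liminf_log_div_log {N : ℝ → ℝ} {L s₀ : ℝ} (hL : 0 < L)
    (hlow : ∀ᶠ ε in 𝓝[>] 0, L ≤ N ε) (hup : ∀ s, s₀ < s → ∀ᶠ ε in 𝓝[>] 0, N ε ≤ ε ^ (-s)) :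
    -s₀ ≤ liminf (fun ε => log (N ε) / log ε) (𝓝[>] 0) := by
  have hlog : ∀ᶠ ε in 𝓝[>] (0 : ℝ), log ε < 0 := tendsto_log_nhdsGT_zero.eventually_lt_atBot 0
  have hbdd : IsCoboundedUnder (· ≥ ·) (𝓝[>] 0) fun ε => log (N ε) / log ε := by
    refine isCoboundedUnder_ge_of_eventually_le _ (x := 1) ?_
    filter_upwards [hlow, hlog, Tendsto.eventually_le_const zero_lt_one
      ((tendsto_const_nhds (x := log L)).div_atBot tendsto_log_nhdsGT_zero)] with ε hN hε hL1
    exact (div_le_div_of_nonpos_of_le hε.le (log_le_log hL hN)).trans hL1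
  refine le_of_forall_pos_le_add fun η hη => sub_le_iff_le_add.1 (le_liminf_of_le hbdd ?_)
  filter_upwards [hup (s₀ + η) (by linarith), hlow, hlog, self_mem_nhdsWithin]
    with ε hN hLN hlogε (hε : 0 < ε)
  rw [le_div_iff_of_neg hlogε]
  calc log (N ε) ≤ log (ε ^ (-(s₀ + η))) := log_le_log (hL.trans_le hLN) hN
    _ = (-s₀ - η) * log ε := by rw [log_rpow hε]; ring

theorem statement_11_general
    (μ : Measure ℝ) [IsProbabilityMeasure μ] (hsupp : μ (Set.Icc (-1 : ℝ) 1)ᶜ = 0)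
    (d : ℝ) (hd : 0 < d) (α : ℝ)
    (C c : ℝ) (hC : 0 < C)
    (hk : ∀ t : ℝ, 2 ≤ t →
      C * Real.exp (-c * t ^ (d / (d + 2)) * Real.log t ^ α)
        ≤ (∫ l, Real.exp (-t * (1 - l)) ∂μ))
    (ε₀ : ℝ) (hε₀0 : 0 < ε₀) (hμε₀ : μ (Set.Icc (1 - ε₀) 1) < 1) :
    (∃ ε₁ : ℝ, 0 < ε₁ ∧ ∀ ε : ℝ, 0 < ε → ε ≤ ε₁ → 0 < μ (Set.Icc (1 - ε) 1)) ∧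
    -(d / 2) ≤ Filter.liminf
        (fun ε : ℝ => Real.log (-Real.log ((μ (Set.Icc (1 - ε) 1)).toReal)) / Real.log ε)
        (nhdsWithin 0 (Set.Ioi 0)) := by
  have hle1 : ∀ᵐ l ∂μ, l ≤ 1 := (ae_iff.2 hsupp).mono fun l hl => hl.2
  have hexp : d / (d + 2) / (1 - d / (d + 2)) = d / 2 := by field_simp; ring
  have hF : ∀ s, d / 2 < s → ∀ᶠ ε in 𝓝[>] 0, exp (-ε ^ (-s)) ≤ μ.real (Icc (1 - ε) 1) :=
    fun s hs => eventually_exp_neg_rpow_le hC (by positivity)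
      ((div_lt_one (by linarith)).2 (by linarith)) (fun t ht ε => (hk t ht).trans
        (integral_exp_le_measureReal_Icc_add_exp μ hle1 (by linarith) ε)) (hexp ▸ hs)
  have hpos : ∀ᶠ ε in 𝓝[>] 0,
      0 < μ.real (Icc (1 - ε) 1) ∧ μ.real (Icc (1 - ε) 1) ≤ μ.real (Icc (1 - ε₀) 1) := by
    filter_upwards [hF (d / 2 + 1) (by linarith), Ioo_mem_nhdsGT hε₀0] with ε hε hεε₀
    exact ⟨(exp_pos _).trans_le hε, measureReal_mono (Icc_subset_Icc (by linarith [hεε₀.2]) le_rfl)⟩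
  have hpos₀ : 0 < μ.real (Icc (1 - ε₀) 1) := let ⟨_, h0, hle⟩ := hpos.exists; h0.trans_le hle
  have hlt₀ : μ.real (Icc (1 - ε₀) 1) < 1 := by
    simpa [measureReal_def] using
      (ENNReal.toReal_lt_toReal (measure_ne_top _ _) ENNReal.one_ne_top).2 hμε₀
  constructor
  · obtain ⟨ε₁, hε₁, hsub⟩ := mem_nhdsGT_iff_exists_Ioo_subset.1 hpos
    refine ⟨ε₁ / 2, half_pos hε₁, fun ε hε hεε₁ => ?_⟩
    exact (ENNReal.toReal_pos_iff.1 (hsub ⟨hε, by linarith [mem_Ioi.1 hε₁]⟩).1).1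
  · refine neg_le_liminf_log_div_log (neg_pos.2 (log_neg hpos₀ hlt₀)) ?_ fun s hs => ?_
    · filter_upwards [hpos] with ε ⟨h0, hle⟩
      exact neg_le_neg (log_le_log h0 hle)
    · filter_upwards [hF s hs] with ε h
      exact neg_le.1 ((log_exp _).symm.le.trans (log_le_log (exp_pos _) h))

/-- lower Lifshitz-tail bound from a lower heat-kernel bound. -/
theorem statement_11
    (μ : Measure ℝ) [IsProbabilityMeasure μ] (hsupp : μ (Set.Icc (-1 : ℝ) 1)ᶜ = 0)
    (d : ℝ) (hd : 0 < d) (α : ℝ) (hα0 : 0 ≤ α) (hα1 : α ≤ 1)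
    (C c : ℝ) (hC : 0 < C) (hc : 0 < c)
    (hk : ∀ t : ℝ, 2 ≤ t →
      C * Real.exp (-c * t ^ (d / (d + 2)) * Real.log t ^ α)
        ≤ (∫ l, Real.exp (-t * (1 - l)) ∂μ))
    (ε₀ : ℝ) (hε₀0 : 0 < ε₀) (hε₀1 : ε₀ ≤ 1) (hμε₀ : μ (Set.Icc (1 - ε₀) 1) < 1) :
    (∃ ε₁ : ℝ, 0 < ε₁ ∧ ∀ ε : ℝ, 0 < ε → ε ≤ ε₁ → 0 < μ (Set.Icc (1 - ε) 1)) ∧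
    -(d / 2) ≤ Filter.liminf
        (fun ε : ℝ => Real.log (-Real.log ((μ (Set.Icc (1 - ε) 1)).toReal)) / Real.log ε)
        (nhdsWithin 0 (Set.Ioi 0)) :=
  statement_11_general μ hsupp d hd α C c hC hk ε₀ hε₀0 hμε₀
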